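/- Let x* ∈ Ω be a Nash equilibrium and 𝐱* := 𝟏_N ⊗ x*. Let θ ∈ [μ, θ0] be a Lipschitz constant of 𝐅, let λ2 > 0 satisfy ⟨v, (I_{Nn} − 𝐖)v⟩ ≥ λ2‖v‖² for all v ∈ ℝ^{Nn} orthogonal to E_n, define α_max := 4μλ2/((θ0+θ)² + 4μθ) and M := α·[[μ/N, −(θ0+θ)/(2√N)], [−(θ0+θ)/(2√N), λ2/α − θ]], and let α ∈ (0, α_max). Let ρ_α > 0 satisfy ⟨Mv, v⟩ ≥ ρ_α‖v‖² for all v ∈ ℝ². Let Φ := I_{Nn} + 𝐖, let ‖Φ‖ be its operator norm, and let λ_m > 0 satisfy ⟨Φv, v⟩ ≥ λ_m‖v‖² for all v ∈ ℝ^{Nn}. Then every sequence (𝐱^k)_{k∈ℕ} in ℝ^{Nn} satisfying 0 ∈ Φ(𝐱^{k+1} − 𝐱^k) + F_a(𝐱^{k+1}) + N_𝛀(𝐱^{k+1}) for all k converges to 𝐱* with linear rate: ‖𝐱^k − 𝐱*‖ ≤ √(‖Φ‖/λ_m) · (1/(1 + ρ_α/‖Φ‖))^k · ‖𝐱^0 −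 𝐱*‖ for all k ∈ ℕ. -/

import Mathlib

/-!
The iteration is a preconditioned proximal-point method for the inclusion
`0 ∈ F_a(𝐱) + N_𝛀(𝐱)`, and `𝐱* = 𝟏_N ⊗ x*` solves it because each agent's first-order
optimality condition at the Nash equilibrium gives `-F_a(𝐱*) ∈ N_𝛀(𝐱*)`.

Split `v = 𝐱 − 𝐱*` into its consensus part `𝟏_N ⊗ ȳ` and the disagreement `v⊥`, orthogonal
to `E_n`. Strong monotonicity of `F` controls `ȳ`, the spectral gap `λ2` of `I − 𝐖` controls
`v⊥`, and the Lipschitz constants `θ0`, `θ` bound the cross terms; the resulting quadratic form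
in `(√N ‖ȳ‖, ‖v⊥‖)` is `M`, so `⟪F_a 𝐱 − F_a 𝐱*, 𝐱 − 𝐱*⟫ ≥ ρ_α ‖𝐱 − 𝐱*‖²`.

Testing the inclusion against `𝐱^{k+1} − 𝐱*` and estimating the cross term by
`2s⟪Φu, v⟫ ≤ s²⟪Φv, v⟫ + ⟪Φu, u⟫` with `s = 1 + ρ_α/‖Φ‖` contracts the `Φ`-energy
`⟪Φ(𝐱^k − 𝐱*), 𝐱^k − 𝐱*⟫` by the factor `(1 + ρ_α/‖Φ‖)⁻²` per step; `λ_m‖·‖² ≤ ⟪Φ·, ·⟫ ≤ ‖Φ‖‖·‖²`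
converts this back to the Euclidean norm.
-/

open scoped InnerProductSpace Matrix

/-- The strategy-profile space `ℝ^n = ℝ^{n_1} × ⋯ × ℝ^{n_N}`, with the Euclidean (ℓ²)
structure. Block `i` is agent `i`'s strategy space `ℝ^{n_i}`. -/
abbrev Prof (N : ℕ) (d : Fin N → ℕ) : Type :=
  PiLp 2 (fun i : Fin N => EuclideanSpace ℝ (Fin (d i)))

/-- The stacked space `ℝ^{Nn}` of all agents' estimates; block `i` is agent `i`'s estimate
`𝐱_i ∈ ℝ^n` of the full strategy profile. -/
abbrev Est (N : ℕ) (d : Fin N → ℕ) : Type :=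
  PiLp 2 (fun _ : Fin N => Prof N d)

/-- The pseudo-gradient `F(x) := col(∇_{x_i} J_i(x_i, x_{−i}))_i`, built from the partial
gradients `G i`. -/
noncomputable def pseudoGrad {N : ℕ} {d : Fin N → ℕ}
    (G : ∀ i : Fin N, Prof N d → EuclideanSpace ℝ (Fin (d i)))
    (x : Prof N d) : Prof N d :=
  WithLp.toLp 2 (fun i => G i x)

/-- The extended pseudo-gradient `𝐅(𝐱) := col(∇_{x_i} J_i(𝐱_{i,i}, 𝐱_{i,−i}))_i`. -/
noncomputable def extPseudoGrad {N : ℕ} {d : Fin N → ℕ}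
    (G : ∀ i : Fin N, Prof N d → EuclideanSpace ℝ (Fin (d i)))
    (bx : Est N d) : Prof N d :=
  WithLp.toLp 2 (fun i => G i (bx i))

/-- `Rᵀ` places block `i` of `v ∈ ℝ^n` in the `(i,i)`-block position of `ℝ^{Nn}`,
with zeros elsewhere. -/
noncomputable def RT {N : ℕ} {d : Fin N → ℕ} (v : Prof N d) : Est N d :=
  WithLp.toLp 2 (fun i => WithLp.toLp 2 (Function.update (0 : Prof N d) i (v i)))

/-- `𝐖 = W ⊗ I_n` acting blockwise: `(𝐖𝐱)_i = Σ_j w_{ij} 𝐱_j`. -/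
noncomputable def Wact {N : ℕ} {d : Fin N → ℕ} (W : Matrix (Fin N) (Fin N) ℝ) (bx : Est N d) : Est N d :=
  WithLp.toLp 2 (fun i => ∑ j, W i j • bx j)

/-- `F_a(𝐱) := α Rᵀ𝐅(𝐱) + (I_{Nn} − 𝐖)𝐱`. -/
noncomputable def Fa {N : ℕ} {d : Fin N → ℕ} (α : ℝ)
    (G : ∀ i : Fin N, Prof N d → EuclideanSpace ℝ (Fin (d i)))
    (W : Matrix (Fin N) (Fin N) ℝ) (bx : Est N d) : Est N d :=
  α • RT (extPseudoGrad G bx) + (bx - Wact W bx)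

/-- `𝛀 := {𝐱 ∈ ℝ^{Nn} : 𝐱_{i,i} ∈ Ω_i for all i}`. -/
def bigOmega {N : ℕ} {d : Fin N → ℕ}
    (Ω : ∀ i : Fin N, Set (EuclideanSpace ℝ (Fin (d i)))) : Set (Est N d) :=
  {bx | ∀ i, bx i i ∈ Ω i}

/-- Normal cone operator of a closed convex set `S` at `x`
(empty if `x ∉ S`). -/
def normalCone {E : Type*} [NormedAddCommGroup E] [InnerProductSpace ℝ E]
    (S : Set E) (x : E) : Set E :=
  {v | x ∈ S ∧ ∀ z ∈ S, ⟪v, z - x⟫_ℝ ≤ 0}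

/-- The consensus subspace `E_n := {𝟏_N ⊗ y : y ∈ ℝ^n} ⊆ ℝ^{Nn}`. -/
def consensus (N : ℕ) (d : Fin N → ℕ) : Set (Est N d) :=
  {bx | ∃ y : Prof N d, ∀ i, bx i = y}

/-- The preconditioning matrix `Φ := I_{Nn} + 𝐖`, as an operator on `ℝ^{Nn}`. -/
noncomputable def PhiOp {N : ℕ} {d : Fin N → ℕ} (W : Matrix (Fin N) (Fin N) ℝ)
    (bx : Est N d) : Est N d :=
  bx + Wact W bx

lemma le_of_mulVec_dotProduct_fin_two_ge {n α μ κ lam2 θ ρ : ℝ} (hn : 0 < n) (hα : α ≠ 0)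
    (hM : ∀ v : Fin 2 → ℝ,
      (α • !![μ / n, -κ / (2 * √n); -κ / (2 * √n), lam2 / α - θ]).mulVec v ⬝ᵥ v ≥
        ρ * (v ⬝ᵥ v)) (B t : ℝ) :
    ρ * (n * B ^ 2 + t ^ 2) ≤ α * (μ * B ^ 2 - κ * B * t - θ * t ^ 2) + lam2 * t ^ 2 := by
  have h := hM ![√n * B, t]
  simp only [dotProduct, Matrix.mulVec, Matrix.smul_apply, Matrix.of_apply, Matrix.cons_val',
    Matrix.cons_val_fin_one, smul_eq_mul, Fin.sum_univ_two, Matrix.cons_val_zero,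
    Matrix.cons_val_one, ge_iff_le] at h
  have hs : √n ^ 2 = n := Real.sq_sqrt hn.le
  have hs0 : √n ≠ 0 := (Real.sqrt_pos.mpr hn).ne'
  field_simp at h
  rw [hs] at h
  refine le_of_mul_le_mul_right ?_ (by positivity : 0 < 2 * n)
  linarith

section PreconditionedProximalPoint

variable {E : Type*} [NormedAddCommGroup E] [InnerProductSpace ℝ E]

theorem IsMinOn.inner_gradient_nonneg [CompleteSpace E] {f : E → ℝ} {s : Set E} {a g : E}
    (hmin : IsMinOn f s a) (hs : Convex ℝ s) (ha : a ∈ s) (hg : HasGradientAt f g a)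
    {y : E} (hy : y ∈ s) : 0 ≤ ⟪g, y - a⟫_ℝ := by
  simpa using hmin.localize.hasFDerivWithinAt_nonneg hg.hasFDerivAt.hasFDerivWithinAt
    (sub_mem_posTangentConeAt_of_segment_subset (hs.segment_subset ha hy))

theorem LinearMap.IsPositive.two_mul_inner_le {T : E →ₗ[ℝ] E} (hT : T.IsPositive)
    (s : ℝ) (u v : E) : 2 * s * ⟪T u, v⟫_ℝ ≤ s ^ 2 * ⟪T v, v⟫_ℝ + ⟪T u, u⟫_ℝ := by
  have h := hT.inner_nonneg_left (s • v - u)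
  have hsymm : ⟪T v, u⟫_ℝ = ⟪T u, v⟫_ℝ := by rw [hT.isSymmetric, real_inner_comm]
  simp only [map_sub, map_smul, inner_sub_left, inner_sub_right, real_inner_smul_left,
    real_inner_smul_right, hsymm] at h
  nlinarith

theorem neg_mul_le_inner_of_norm_le {u v : E} {p q : ℝ} (hu : ‖u‖ ≤ p) (hv : ‖v‖ ≤ q) :
    -(p * q) ≤ ⟪u, v⟫_ℝ := by
  have huv : ‖u‖ * ‖v‖ ≤ p * q := mul_le_mul hu hv (norm_nonneg _) ((norm_nonneg _).trans hu)
  linarith [neg_abs_le ⟪u, v⟫_ℝ, abs_real_inner_le_norm u v]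

theorem LinearMap.norm_apply_le_of_isLUB {F : Type*} [NormedAddCommGroup F] [NormedSpace ℝ F]
    (T : E →ₗ[ℝ] F) {c : ℝ} (hc : IsLUB ((fun v => ‖T v‖) '' {v | ‖v‖ ≤ 1}) c) (v : E) :
    ‖T v‖ ≤ c * ‖v‖ := by
  rcases eq_or_ne v 0 with rfl | hv
  · simp
  have hv' : 0 < ‖v‖ := norm_pos_iff.mpr hv
  have hunit : ‖T (‖v‖⁻¹ • v)‖ ≤ c :=
    hc.1 ⟨‖v‖⁻¹ • v, by simp [norm_smul, inv_mul_cancel₀ hv'.ne'], rfl⟩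
  rw [map_smul, norm_smul, norm_inv, norm_norm, inv_mul_le_iff₀ hv'] at hunit
  linarith

theorem LinearMap.inner_map_self_le_of_isLUB (T : E →ₗ[ℝ] E) {c : ℝ}
    (hc : IsLUB ((fun v => ‖T v‖) '' {v | ‖v‖ ≤ 1}) c) (v : E) : ⟪T v, v⟫_ℝ ≤ c * ‖v‖ ^ 2 :=
  calc ⟪T v, v⟫_ℝ ≤ ‖T v‖ * ‖v‖ := real_inner_le_norm _ _
    _ ≤ c * ‖v‖ * ‖v‖ := mul_le_mul_of_nonneg_right (T.norm_apply_le_of_isLUB hc v) (norm_nonneg _)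
    _ = c * ‖v‖ ^ 2 := by ring

theorem LinearMap.nonneg_of_isLUB {F : Type*} [NormedAddCommGroup F] [NormedSpace ℝ F]
    (T : E →ₗ[ℝ] F) {c : ℝ} (hc : IsLUB ((fun v => ‖T v‖) '' {v | ‖v‖ ≤ 1}) c) : 0 ≤ c := by
  simpa using hc.1 ⟨0, by simp, rfl⟩

variable {T : E →ₗ[ℝ] E} {A : E → E} {S : Set E} {xs : E} {c ρ : ℝ}

theorem inner_map_add_le_of_prox_step (hxs : xs ∈ S) (hAxs : ∀ z ∈ S, 0 ≤ ⟪A xs, z - xs⟫_ℝ)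
    (hA : ∀ x, ρ * ‖x - xs‖ ^ 2 ≤ ⟪A x - A xs, x - xs⟫_ℝ)
    {x x' w : E} (hw : w ∈ normalCone S x') (hstep : T (x' - x) + A x' + w = 0) :
    ⟪T (x' - xs), x' - xs⟫_ℝ + ρ * ‖x' - xs‖ ^ 2 ≤ ⟪T (x - xs), x' - xs⟫_ℝ := by
  have hzero : ⟪T (x' - x) + A x' + w, x' - xs⟫_ℝ = 0 := by rw [hstep, inner_zero_left]
  have hT : T (x' - x) = T (x' - xs) - T (x - xs) := by rw [← map_sub, sub_sub_sub_cancel_right]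
  have hw' : 0 ≤ ⟪w, x' - xs⟫_ℝ := by
    have hcone := hw.2 xs hxs
    rw [← neg_sub, inner_neg_right] at hcone
    linarith
  have hAx' : ρ * ‖x' - xs‖ ^ 2 ≤ ⟪A x', x' - xs⟫_ℝ := by
    have hvi := hAxs x' hw.1
    have hmono := hA x'
    rw [inner_sub_left] at hmono
    linarith
  rw [inner_add_left, inner_add_left, hT, inner_sub_left] at hzero
  linarith

theorem sq_one_add_div_mul_inner_le_of_prox_step (hT : T.IsPositive) (hc : 0 ≤ c) (hρ : 0 ≤ ρ)
    (hup : ∀ v, ⟪T v, v⟫_ℝ ≤ c * ‖v‖ ^ 2) (hxs : xs ∈ S)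
    (hAxs : ∀ z ∈ S, 0 ≤ ⟪A xs, z - xs⟫_ℝ) (hA : ∀ x, ρ * ‖x - xs‖ ^ 2 ≤ ⟪A x - A xs, x - xs⟫_ℝ)
    {x x' w : E} (hw : w ∈ normalCone S x') (hstep : T (x' - x) + A x' + w = 0) :
    (1 + ρ / c) ^ 2 * ⟪T (x' - xs), x' - xs⟫_ℝ ≤ ⟪T (x - xs), x - xs⟫_ℝ := by
  have hinner := inner_map_add_le_of_prox_step hxs hAxs hA hw hstep
  have hρc : ρ / c * ⟪T (x' - xs), x' - xs⟫_ℝ ≤ ρ * ‖x' - xs‖ ^ 2 := by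
    calc ρ / c * ⟪T (x' - xs), x' - xs⟫_ℝ ≤ ρ / c * (c * ‖x' - xs‖ ^ 2) :=
          mul_le_mul_of_nonneg_left (hup _) (div_nonneg hρ hc)
      _ = ρ / c * c * ‖x' - xs‖ ^ 2 := by ring
      _ ≤ ρ * ‖x' - xs‖ ^ 2 := by
          rcases hc.eq_or_lt with rfl | hc'
          · simp only [div_zero, zero_mul]; positivity
          · rw [div_mul_cancel₀ _ hc'.ne']
  have hamgm := hT.two_mul_inner_le (1 + ρ / c) (x - xs) (x' - xs)
  have ht : 0 ≤ ρ / c := div_nonneg hρ hc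
  nlinarith

theorem norm_sub_le_of_prox_iteration (hT : T.IsSymmetric) {lam : ℝ} (hlam : 0 < lam)
    (hlow : ∀ v, lam * ‖v‖ ^ 2 ≤ ⟪T v, v⟫_ℝ) (hc : 0 ≤ c) (hup : ∀ v, ⟪T v, v⟫_ℝ ≤ c * ‖v‖ ^ 2)
    (hρ : 0 ≤ ρ) (hxs : xs ∈ S) (hAxs : ∀ z ∈ S, 0 ≤ ⟪A xs, z - xs⟫_ℝ)
    (hA : ∀ x, ρ * ‖x - xs‖ ^ 2 ≤ ⟪A x - A xs, x - xs⟫_ℝ) (x : ℕ → E)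
    (hx : ∀ k, ∃ w ∈ normalCone S (x (k + 1)), T (x (k + 1) - x k) + A (x (k + 1)) + w = 0)
    (k : ℕ) : ‖x k - xs‖ ≤ √(c / lam) * (1 / (1 + ρ / c)) ^ k * ‖x 0 - xs‖ := by
  have hpos : T.IsPositive :=
    ⟨hT, fun v => by simpa using (mul_nonneg hlam.le (sq_nonneg ‖v‖)).trans (hlow v)⟩
  set q := 1 / (1 + ρ / c) with hq_def
  have hq : 0 ≤ q := by positivity
  have hdecay : ∀ n, ⟪T (x n - xs), x n - xs⟫_ℝ ≤ (q ^ n) ^ 2 * ⟪T (x 0 - xs), x 0 - xs⟫_ℝ := by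
    intro n
    induction n with
    | zero => simp
    | succ n ih =>
      obtain ⟨w, hw, hstep⟩ := hx n
      have hcontr := sq_one_add_div_mul_inner_le_of_prox_step hpos hc hρ hup hxs hAxs hA hw hstep
      have hq2 : q ^ 2 * (1 + ρ / c) ^ 2 = 1 := by
        rw [← mul_pow, hq_def, one_div_mul_cancel (by positivity), one_pow]
      calc ⟪T (x (n + 1) - xs), x (n + 1) - xs⟫_ℝ
          = q ^ 2 * ((1 + ρ / c) ^ 2 * ⟪T (x (n + 1) - xs), x (n + 1) - xs⟫_ℝ) := by
            rw [← mul_assoc, hq2, one_mul]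
        _ ≤ q ^ 2 * ((q ^ n) ^ 2 * ⟪T (x 0 - xs), x 0 - xs⟫_ℝ) :=
            mul_le_mul_of_nonneg_left (hcontr.trans ih) (by positivity)
        _ = (q ^ (n + 1)) ^ 2 * ⟪T (x 0 - xs), x 0 - xs⟫_ℝ := by ring
  have hsq : ‖x k - xs‖ ^ 2 ≤ (√(c / lam) * q ^ k * ‖x 0 - xs‖) ^ 2 := by
    rw [mul_pow, mul_pow, Real.sq_sqrt (div_nonneg hc hlam.le), div_mul_eq_mul_div,
      div_mul_eq_mul_div, le_div_iff₀ hlam]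
    calc ‖x k - xs‖ ^ 2 * lam ≤ ⟪T (x k - xs), x k - xs⟫_ℝ := by linarith [hlow (x k - xs)]
      _ ≤ (q ^ k) ^ 2 * ⟪T (x 0 - xs), x 0 - xs⟫_ℝ := hdecay k
      _ ≤ (q ^ k) ^ 2 * (c * ‖x 0 - xs‖ ^ 2) := by gcongr; exact hup _
      _ = c * (q ^ k) ^ 2 * ‖x 0 - xs‖ ^ 2 := by ring
  exact (pow_le_pow_iff_left₀ (norm_nonneg _) (by positivity) two_ne_zero).mp hsq

end PreconditionedProximalPoint

section NetworkGame

variable {N : ℕ} {d : Fin N → ℕ}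

/-- `𝟏_N ⊗ y`. -/
noncomputable def constEst (y : Prof N d) : Est N d := WithLp.toLp 2 (fun _ => y)

/-- The paper's `R`: `R𝐱 = col(𝐱_{i,i})_i`. -/
noncomputable def diagBlock (u : Est N d) : Prof N d := WithLp.toLp 2 (fun i => u i i)

noncomputable def avgBlock (u : Est N d) : Prof N d := (N : ℝ)⁻¹ • ∑ i, u i

@[simp] lemma constEst_apply (y : Prof N d) (i : Fin N) : constEst y i = y := rfl

@[simp] lemma diagBlock_apply (u : Est N d) (i : Fin N) : diagBlock u i = u i i := rfl

@[simp] lemma Wact_apply (W : Matrix (Fin N) (Fin N) ℝ) (u : Est N d) (i : Fin N) :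
    Wact W u i = ∑ j, W i j • u j := rfl

noncomputable def Wlin (W : Matrix (Fin N) (Fin N) ℝ) : Est N d →ₗ[ℝ] Est N d where
  toFun := Wact W
  map_add' u v := by ext i : 1; simp [smul_add, Finset.sum_add_distrib]
  map_smul' r u := by ext i : 1; simp [Finset.smul_sum, smul_comm r]

@[simp] lemma Wlin_apply (W : Matrix (Fin N) (Fin N) ℝ) (u : Est N d) : Wlin W u = Wact W u :=
  rfl

lemma PhiOp_eq (W : Matrix (Fin N) (Fin N) ℝ) :
    PhiOp W = ⇑(LinearMap.id + Wlin W : Est N d →ₗ[ℝ] Est N d) := rfl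

lemma Wlin_isSymmetric {W : Matrix (Fin N) (Fin N) ℝ} (hW : W.IsSymm) :
    (Wlin W : Est N d →ₗ[ℝ] Est N d).IsSymmetric := by
  intro u v
  change ⟪Wact W u, v⟫_ℝ = ⟪u, Wact W v⟫_ℝ
  rw [PiLp.inner_apply, PiLp.inner_apply]
  simp only [Wact_apply, sum_inner, inner_sum, real_inner_smul_left, real_inner_smul_right]
  rw [Finset.sum_comm]
  exact Finset.sum_congr rfl fun i _ => Finset.sum_congr rfl fun j _ => by
    rw [hW.apply i j, real_inner_comm]

lemma Wact_constEst {W : Matrix (Fin N) (Fin N) ℝ} (hW : ∀ i, ∑ j, W i j = 1) (y : Prof N d) :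
    Wact W (constEst y) = constEst y := by
  ext i : 1
  simp [← Finset.sum_smul, hW i]

lemma inner_constEst (y : Prof N d) (u : Est N d) : ⟪constEst y, u⟫_ℝ = ⟪y, ∑ i, u i⟫_ℝ := by
  simp [PiLp.inner_apply, inner_sum]

lemma norm_sq_constEst (y : Prof N d) : ‖constEst y‖ ^ 2 = N * ‖y‖ ^ 2 := by
  rw [← real_inner_self_eq_norm_sq, inner_constEst]
  simp [← Nat.cast_smul_eq_nsmul ℝ, real_inner_smul_right]

lemma sum_sub_constEst_avgBlock (hN : 0 < N) (u : Est N d) :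
    ∑ i, (u - constEst (avgBlock u)) i = 0 := by
  have hN' : (N : ℝ) ≠ 0 := by exact_mod_cast hN.ne'
  simp [Finset.sum_sub_distrib, avgBlock, ← Nat.cast_smul_eq_nsmul ℝ, smul_smul, hN']


lemma Wact_sub (W : Matrix (Fin N) (Fin N) ℝ) (u v : Est N d) :
    Wact W (u - v) = Wact W u - Wact W v :=
  map_sub (Wlin W) u v

lemma inner_eq_zero_of_mem_consensus {v : Est N d} (hv : ∑ i, v i = 0) :
    ∀ u ∈ consensus N d, ⟪v, u⟫_ℝ = 0 := by
  rintro u ⟨y, hy⟩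
  have hu : u = constEst y := by ext i : 1; exact hy i
  rw [hu, real_inner_comm, inner_constEst, hv, inner_zero_right]

lemma norm_sq_eq_avgBlock_add (hN : 0 < N) (u : Est N d) :
    ‖u‖ ^ 2 = N * ‖avgBlock u‖ ^ 2 + ‖u - constEst (avgBlock u)‖ ^ 2 := by
  have horth : ⟪constEst (avgBlock u), u - constEst (avgBlock u)⟫_ℝ = 0 := by
    rw [inner_constEst, sum_sub_constEst_avgBlock hN, inner_zero_right]
  conv_lhs => rw [← add_sub_cancel (constEst (avgBlock u)) u]
  rw [norm_add_sq_real, horth, norm_sq_constEst]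
  ring

lemma mul_norm_sq_le_inner_sub_Wact (hN : 0 < N) {W : Matrix (Fin N) (Fin N) ℝ} (hWsymm : W.IsSymm)
    (hWstoch : ∀ i, ∑ j, W i j = 1) {lam2 : ℝ}
    (hgap : ∀ v : Est N d, (∀ u ∈ consensus N d, ⟪v, u⟫_ℝ = 0) →
      ⟪v, v - Wact W v⟫_ℝ ≥ lam2 * ‖v‖ ^ 2) (u : Est N d) :
    lam2 * ‖u - constEst (avgBlock u)‖ ^ 2 ≤ ⟪u - Wact W u, u⟫_ℝ := by
  set y := avgBlock u
  set v := u - constEst y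
  have hu : constEst y + v = u := add_sub_cancel _ _
  have hWv : u - Wact W u = v - Wact W v := by
    rw [Wact_sub, Wact_constEst hWstoch, ← sub_add, sub_right_comm, sub_add_cancel]
  have hconst : ⟪v - Wact W v, constEst y⟫_ℝ = 0 := by
    rw [inner_sub_left, ← Wlin_apply, Wlin_isSymmetric hWsymm, Wlin_apply,
      Wact_constEst hWstoch, sub_self]
  calc lam2 * ‖v‖ ^ 2 ≤ ⟪v, v - Wact W v⟫_ℝ :=
        hgap v (inner_eq_zero_of_mem_consensus (sum_sub_constEst_avgBlock hN u))
    _ = ⟪u - Wact W u, u⟫_ℝ := by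
        rw [hWv, real_inner_comm]
        conv_rhs => rw [← hu]
        rw [inner_add_right, hconst, zero_add]

lemma inner_RT (p : Prof N d) (u : Est N d) : ⟪RT p, u⟫_ℝ = ⟪p, diagBlock u⟫_ℝ := by
  rw [PiLp.inner_apply, PiLp.inner_apply]
  refine Finset.sum_congr rfl fun i _ => ?_
  rw [PiLp.inner_apply, Finset.sum_eq_single i]
  · simp [RT]
  · intro j _ hj
    simp [RT, Function.update_of_ne hj]
  · simp

lemma norm_diagBlock_le (u : Est N d) : ‖diagBlock u‖ ≤ ‖u‖ := by
  rw [← sq_le_sq₀ (norm_nonneg _) (norm_nonneg _), PiLp.norm_sq_eq_of_L2 _ (diagBlock u),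
    PiLp.norm_sq_eq_of_L2 _ u]
  refine Finset.sum_le_sum fun i _ => ?_
  rw [diagBlock_apply, PiLp.norm_sq_eq_of_L2 _ (u i)]
  exact Finset.single_le_sum (f := fun j => ‖u i j‖ ^ 2) (fun j _ => sq_nonneg _)
    (Finset.mem_univ i)

variable {G : ∀ i : Fin N, Prof N d → EuclideanSpace ℝ (Fin (d i))}

lemma extPseudoGrad_constEst (y : Prof N d) : extPseudoGrad G (constEst y) = pseudoGrad G y :=
  rfl

lemma inner_extPseudoGrad_sub_pseudoGrad_ge {μ θ0 θ : ℝ}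
    (hFmon : ∀ x y : Prof N d,
      ⟪x - y, pseudoGrad G x - pseudoGrad G y⟫_ℝ ≥ μ * ‖x - y‖ ^ 2)
    (hFlip : ∀ x y : Prof N d, ‖pseudoGrad G x - pseudoGrad G y‖ ≤ θ0 * ‖x - y‖)
    (hextLip : ∀ bx by_ : Est N d,
      ‖extPseudoGrad G bx - extPseudoGrad G by_‖ ≤ θ * ‖bx - by_‖) (xs : Prof N d) (v : Est N d) :
    μ * ‖avgBlock v‖ ^ 2 - (θ0 + θ) * ‖avgBlock v‖ * ‖v - constEst (avgBlock v)‖ -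
        θ * ‖v - constEst (avgBlock v)‖ ^ 2 ≤
      ⟪extPseudoGrad G (constEst xs + v) - pseudoGrad G xs, diagBlock v⟫_ℝ := by
  set y := avgBlock v
  set B := ‖y‖
  set t := ‖v - constEst y‖
  have hmid : constEst xs + v - constEst (xs + y) = v - constEst y := by
    ext i : 1; simp
  have hdiag : diagBlock v = y + diagBlock (v - constEst y) := by
    ext i : 1; simp
  have hdiag_le : ‖diagBlock v‖ ≤ B + t := by
    rw [hdiag]
    exact (norm_add_le _ _).trans (add_le_add le_rfl (norm_diagBlock_le _))
  have hmon : μ * B ^ 2 ≤ ⟪pseudoGrad G (xs + y) - pseudoGrad G xs, y⟫_ℝ := by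
    have h := hFmon (xs + y) xs
    rwa [add_sub_cancel_left, real_inner_comm] at h
  have hlip : ‖pseudoGrad G (xs + y) - pseudoGrad G xs‖ ≤ θ0 * B := by
    have h := hFlip (xs + y) xs
    rwa [add_sub_cancel_left] at h
  have hcross := neg_mul_le_inner_of_norm_le hlip (norm_diagBlock_le (v - constEst y))
  have hext : ‖extPseudoGrad G (constEst xs + v) - pseudoGrad G (xs + y)‖ ≤ θ * t := by
    have h := hextLip (constEst xs + v) (constEst (xs + y))
    rwa [hmid, extPseudoGrad_constEst] at h
  have hdis := neg_mul_le_inner_of_norm_le hext hdiag_le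
  have hsplit : ⟪extPseudoGrad G (constEst xs + v) - pseudoGrad G xs, diagBlock v⟫_ℝ =
      ⟪extPseudoGrad G (constEst xs + v) - pseudoGrad G (xs + y), diagBlock v⟫_ℝ +
        ⟪pseudoGrad G (xs + y) - pseudoGrad G xs, y⟫_ℝ +
        ⟪pseudoGrad G (xs + y) - pseudoGrad G xs, diagBlock (v - constEst y)⟫_ℝ := by
    rw [add_assoc, ← inner_add_right, ← hdiag, ← inner_add_left, sub_add_sub_cancel]
  rw [hsplit]
  linarith

variable {W : Matrix (Fin N) (Fin N) ℝ} {α : ℝ}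

lemma Fa_constEst (hWstoch : ∀ i, ∑ j, W i j = 1) (xs : Prof N d) :
    Fa α G W (constEst xs) = α • RT (pseudoGrad G xs) := by
  rw [Fa, Wact_constEst hWstoch, sub_self, add_zero, extPseudoGrad_constEst]

lemma mul_norm_sq_le_inner_Fa_sub (hN : 0 < N) (hWsymm : W.IsSymm)
    (hWstoch : ∀ i, ∑ j, W i j = 1) {μ θ0 θ lam2 ρ : ℝ}
    (hFmon : ∀ x y : Prof N d,
      ⟪x - y, pseudoGrad G x - pseudoGrad G y⟫_ℝ ≥ μ * ‖x - y‖ ^ 2)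
    (hFlip : ∀ x y : Prof N d, ‖pseudoGrad G x - pseudoGrad G y‖ ≤ θ0 * ‖x - y‖)
    (hextLip : ∀ bx by_ : Est N d,
      ‖extPseudoGrad G bx - extPseudoGrad G by_‖ ≤ θ * ‖bx - by_‖)
    (hgap : ∀ v : Est N d, (∀ u ∈ consensus N d, ⟪v, u⟫_ℝ = 0) →
      ⟪v, v - Wact W v⟫_ℝ ≥ lam2 * ‖v‖ ^ 2)
    (hα : 0 < α)
    (hM : ∀ v : Fin 2 → ℝ,
      (α • !![μ / (N : ℝ), -(θ0 + θ) / (2 * Real.sqrt (N : ℝ));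
        -(θ0 + θ) / (2 * Real.sqrt (N : ℝ)), lam2 / α - θ]).mulVec v ⬝ᵥ v ≥
        ρ * (v ⬝ᵥ v))
    (xs : Prof N d) (bx : Est N d) :
    ρ * ‖bx - constEst xs‖ ^ 2 ≤ ⟪Fa α G W bx - Fa α G W (constEst xs), bx - constEst xs⟫_ℝ := by
  obtain ⟨v, rfl⟩ : ∃ v, bx = constEst xs + v := ⟨bx - constEst xs, (add_sub_cancel _ _).symm⟩
  have hFa : Fa α G W (constEst xs + v) - Fa α G W (constEst xs) =
      α • (RT (extPseudoGrad G (constEst xs + v)) - RT (pseudoGrad G xs)) + (v - Wact W v) := by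
    rw [Fa_constEst hWstoch, Fa, ← Wlin_apply, map_add, Wlin_apply, Wlin_apply,
      Wact_constEst hWstoch, smul_sub]
    abel
  have hsplit : ⟪Fa α G W (constEst xs + v) - Fa α G W (constEst xs), v⟫_ℝ =
      α * ⟪extPseudoGrad G (constEst xs + v) - pseudoGrad G xs, diagBlock v⟫_ℝ +
        ⟪v - Wact W v, v⟫_ℝ := by
    rw [hFa, inner_add_left, real_inner_smul_left, inner_sub_left, inner_RT, inner_RT,
      ← inner_sub_left]
  have hgrad := inner_extPseudoGrad_sub_pseudoGrad_ge hFmon hFlip hextLip xs v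
  have hcons := mul_norm_sq_le_inner_sub_Wact hN hWsymm hWstoch hgap v
  have hquad := le_of_mulVec_dotProduct_fin_two_ge (by exact_mod_cast hN) hα.ne' hM
    ‖avgBlock v‖ ‖v - constEst (avgBlock v)‖
  rw [add_sub_cancel_left, hsplit, norm_sq_eq_avgBlock_add hN v]
  linarith [mul_le_mul_of_nonneg_left hgrad hα.le]

lemma inner_Fa_constEst_sub_nonneg (hα : 0 ≤ α) (hWstoch : ∀ i, ∑ j, W i j = 1)
    {Ω : ∀ i : Fin N, Set (EuclideanSpace ℝ (Fin (d i)))} (hΩ : ∀ i, Convex ℝ (Ω i))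
    {J : ∀ _ : Fin N, Prof N d → ℝ}
    (hGgrad : ∀ i (x : Prof N d),
      HasGradientAt (fun y => J i (WithLp.toLp 2 (Function.update x i y))) (G i x) (x i))
    {xs : Prof N d} (hxsΩ : ∀ i, xs i ∈ Ω i)
    (hxsNE : ∀ i, ∀ y ∈ Ω i, J i xs ≤ J i (WithLp.toLp 2 (Function.update xs i y)))
    {z : Est N d} (hz : z ∈ bigOmega Ω) :
    0 ≤ ⟪Fa α G W (constEst xs), z - constEst xs⟫_ℝ := by
  rw [Fa_constEst hWstoch, real_inner_smul_left, inner_RT, PiLp.inner_apply]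
  refine mul_nonneg hα (Finset.sum_nonneg fun i _ => ?_)
  have hmin : IsMinOn (fun y => J i (WithLp.toLp 2 (Function.update xs i y))) (Ω i) (xs i) :=
    fun y hy => by simpa using hxsNE i y hy
  exact hmin.inner_gradient_nonneg (hΩ i) (hxsΩ i) (hGgrad i xs) (hz i)

end NetworkGame

theorem stmt10_general {N : ℕ} {d : Fin N → ℕ} (hN : 0 < N)
    (Ω : ∀ i : Fin N, Set (EuclideanSpace ℝ (Fin (d i))))
    (hΩ : ∀ i, (Ω i).Nonempty ∧ IsClosed (Ω i) ∧ Convex ℝ (Ω i))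
    (J : ∀ _ : Fin N, Prof N d → ℝ)
    (G : ∀ i : Fin N, Prof N d → EuclideanSpace ℝ (Fin (d i)))
    (hGgrad : ∀ i (x : Prof N d),
      HasGradientAt (fun y => J i (WithLp.toLp 2 (Function.update x i y))) (G i x) (x i))
    (μ θ0 : ℝ)
    (hFmon : ∀ x y : Prof N d,
      ⟪x - y, pseudoGrad G x - pseudoGrad G y⟫_ℝ ≥ μ * ‖x - y‖ ^ 2)
    (hFlip : ∀ x y : Prof N d, ‖pseudoGrad G x - pseudoGrad G y‖ ≤ θ0 * ‖x - y‖)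
    (W : Matrix (Fin N) (Fin N) ℝ)
    (hWsymm : W.IsSymm)
    (hWstoch : ∀ i, ∑ j, W i j = 1)
    -- x* is a Nash equilibrium, and 𝐱* := 𝟏_N ⊗ x*
    (xstar : Prof N d) (hxstarΩ : ∀ i, xstar i ∈ Ω i)
    (hxstarNE : ∀ i, ∀ y ∈ Ω i, J i xstar ≤ J i (WithLp.toLp 2 (Function.update xstar i y)))
    (bxstar : Est N d) (hbxstar : ∀ i, bxstar i = xstar)
    -- θ is a Lipschitz constant of 𝐅, with θ ∈ [μ, θ0]
    (θ : ℝ)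
    (hextLip : ∀ bx by_ : Est N d,
      ‖extPseudoGrad G bx - extPseudoGrad G by_‖ ≤ θ * ‖bx - by_‖)
    -- λ2 is a spectral-gap constant of I − 𝐖 orthogonally to the consensus subspace
    (lam2 : ℝ)
    (hgap : ∀ v : Est N d, (∀ u ∈ consensus N d, ⟪v, u⟫_ℝ = 0) →
      ⟪v, v - Wact W v⟫_ℝ ≥ lam2 * ‖v‖ ^ 2)
    -- α ∈ (0, α_max)
    (α : ℝ) (hα0 : 0 < α)
    -- ρ_α > 0 with M ⪰ ρ_α I
    (ρα : ℝ) (hρα : 0 < ρα)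
    (hM : ∀ v : Fin 2 → ℝ,
      (α • !![μ / (N : ℝ), -(θ0 + θ) / (2 * Real.sqrt (N : ℝ));
        -(θ0 + θ) / (2 * Real.sqrt (N : ℝ)), lam2 / α - θ]).mulVec v ⬝ᵥ v ≥
        ρα * (v ⬝ᵥ v))
    -- nΦ is the operator norm of Φ = I + 𝐖, and Φ ⪰ λ_m I with λ_m > 0
    (nΦ : ℝ) (hnΦ : IsLUB ((fun v : Est N d => ‖PhiOp W v‖) '' {v | ‖v‖ ≤ 1}) nΦ)
    (lamm : ℝ) (hlamm : 0 < lamm)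
    (hΦlower : ∀ v : Est N d, ⟪PhiOp W v, v⟫_ℝ ≥ lamm * ‖v‖ ^ 2) :
    ∀ bx : ℕ → Est N d,
      (∀ k : ℕ, ∃ w ∈ normalCone (bigOmega Ω) (bx (k + 1)),
        PhiOp W (bx (k + 1) - bx k) + Fa α G W (bx (k + 1)) + w = 0) →
      ∀ k : ℕ, ‖bx k - bxstar‖ ≤
        Real.sqrt (nΦ / lamm) * (1 / (1 + ρα / nΦ)) ^ k * ‖bx 0 - bxstar‖ := by
  intro bx hbx k
  obtain rfl : bxstar = constEst xstar := PiLp.ext hbxstar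
  rw [PhiOp_eq] at hbx hnΦ hΦlower
  exact norm_sub_le_of_prox_iteration (LinearMap.IsSymmetric.id.add (Wlin_isSymmetric hWsymm))
    hlamm hΦlower (LinearMap.nonneg_of_isLUB _ hnΦ) (LinearMap.inner_map_self_le_of_isLUB _ hnΦ)
    hρα.le (show constEst xstar ∈ bigOmega Ω from hxstarΩ)
    (fun _ hz => inner_Fa_constEst_sub_nonneg hα0.le hWstoch (fun i => (hΩ i).2.2) hGgrad hxstarΩ
      hxstarNE hz)
    (mul_norm_sq_le_inner_Fa_sub hN hWsymm hWstoch hFmon hFlip hextLip hgap hα0 hM xstar) bx hbx k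

/-- Theorem 2 of the paper, main result. Let `x*` be a Nash equilibrium
and `𝐱* = 𝟏_N ⊗ x*`. Under the standing assumptions, for `θ ∈ [μ, θ0]` a Lipschitz constant
of `𝐅`, `λ2 > 0` a spectral-gap constant of `I − 𝐖`, `α ∈ (0, α_max)`,
`ρ_α > 0` with `M ⪰ ρ_α I`, `Φ := I + 𝐖` with operator norm `‖Φ‖ = nΦ` and
`Φ ⪰ λ_m I`, every sequence generated by the preconditioned proximal-point iteration
`0 ∈ Φ(𝐱^{k+1} − 𝐱^k) + F_a(𝐱^{k+1}) + N_𝛀(𝐱^{k+1})` converges to `𝐱*` with linear rate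
`‖𝐱^k − 𝐱*‖ ≤ √(‖Φ‖/λ_m) (1/(1 + ρ_α/‖Φ‖))^k ‖𝐱^0 − 𝐱*‖`. -/
theorem stmt10 {N : ℕ} {d : Fin N → ℕ} (hN : 0 < N)
    (Ω : ∀ i : Fin N, Set (EuclideanSpace ℝ (Fin (d i))))
    (hΩ : ∀ i, (Ω i).Nonempty ∧ IsClosed (Ω i) ∧ Convex ℝ (Ω i))
    (J : ∀ _ : Fin N, Prof N d → ℝ)
    (hJcont : ∀ i, Continuous (J i))
    (hJconv : ∀ i (x : Prof N d),
      ConvexOn ℝ Set.univ (fun y => J i (WithLp.toLp 2 (Function.update x i y))))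
    (G : ∀ i : Fin N, Prof N d → EuclideanSpace ℝ (Fin (d i)))
    (hGgrad : ∀ i (x : Prof N d),
      HasGradientAt (fun y => J i (WithLp.toLp 2 (Function.update x i y))) (G i x) (x i))
    (μ θ0 : ℝ) (hμ : 0 < μ) (hθ0 : 0 < θ0)
    (hFmon : ∀ x y : Prof N d,
      ⟪x - y, pseudoGrad G x - pseudoGrad G y⟫_ℝ ≥ μ * ‖x - y‖ ^ 2)
    (hFlip : ∀ x y : Prof N d, ‖pseudoGrad G x - pseudoGrad G y‖ ≤ θ0 * ‖x - y‖)
    (W : Matrix (Fin N) (Fin N) ℝ)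
    (hWsymm : W.IsSymm) (hWnonneg : ∀ i j, 0 ≤ W i j)
    (hWstoch : ∀ i, ∑ j, W i j = 1) (hWdiag : ∀ i, 0 < W i i)
    (hWconn : ∀ S : Finset (Fin N), S.Nonempty → S ≠ Finset.univ →
      ∃ i ∈ S, ∃ j ∉ S, 0 < W i j)
    -- x* is a Nash equilibrium, and 𝐱* := 𝟏_N ⊗ x*
    (xstar : Prof N d) (hxstarΩ : ∀ i, xstar i ∈ Ω i)
    (hxstarNE : ∀ i, ∀ y ∈ Ω i, J i xstar ≤ J i (WithLp.toLp 2 (Function.update xstar i y)))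
    (bxstar : Est N d) (hbxstar : ∀ i, bxstar i = xstar)
    -- θ is a Lipschitz constant of 𝐅, with θ ∈ [μ, θ0]
    (θ : ℝ) (hθl : μ ≤ θ) (hθu : θ ≤ θ0)
    (hextLip : ∀ bx by_ : Est N d,
      ‖extPseudoGrad G bx - extPseudoGrad G by_‖ ≤ θ * ‖bx - by_‖)
    -- λ2 is a spectral-gap constant of I − 𝐖 orthogonally to the consensus subspace
    (lam2 : ℝ) (hlam2 : 0 < lam2)
    (hgap : ∀ v : Est N d, (∀ u ∈ consensus N d, ⟪v, u⟫_ℝ = 0) →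
      ⟪v, v - Wact W v⟫_ℝ ≥ lam2 * ‖v‖ ^ 2)
    -- α ∈ (0, α_max)
    (α : ℝ) (hα0 : 0 < α)
    (hαmax : α < 4 * μ * lam2 / ((θ0 + θ) ^ 2 + 4 * μ * θ))
    -- ρ_α > 0 with M ⪰ ρ_α I
    (ρα : ℝ) (hρα : 0 < ρα)
    (hM : ∀ v : Fin 2 → ℝ,
      (α • !![μ / (N : ℝ), -(θ0 + θ) / (2 * Real.sqrt (N : ℝ));
        -(θ0 + θ) / (2 * Real.sqrt (N : ℝ)), lam2 / α - θ]).mulVec v ⬝ᵥ v ≥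
        ρα * (v ⬝ᵥ v))
    -- nΦ is the operator norm of Φ = I + 𝐖, and Φ ⪰ λ_m I with λ_m > 0
    (nΦ : ℝ) (hnΦ : IsLUB ((fun v : Est N d => ‖PhiOp W v‖) '' {v | ‖v‖ ≤ 1}) nΦ)
    (lamm : ℝ) (hlamm : 0 < lamm)
    (hΦlower : ∀ v : Est N d, ⟪PhiOp W v, v⟫_ℝ ≥ lamm * ‖v‖ ^ 2) :
    ∀ bx : ℕ → Est N d,
      (∀ k : ℕ, ∃ w ∈ normalCone (bigOmega Ω) (bx (k + 1)),
        PhiOp W (bx (k + 1) - bx k) + Fa α G W (bx (k + 1)) + w = 0) →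
      ∀ k : ℕ, ‖bx k - bxstar‖ ≤
        Real.sqrt (nΦ / lamm) * (1 / (1 + ρα / nΦ)) ^ k * ‖bx 0 - bxstar‖ :=
  stmt10_general hN Ω hΩ J G hGgrad μ θ0 hFmon hFlip W hWsymm hWstoch xstar hxstarΩ hxstarNE bxstar
    hbxstar θ hextLip lam2 hgap α hα0 ρα hρα hM nΦ hnΦ lamm hlamm hΦlower
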